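/- arXiv:2403.08183 — 4 statements merged into one kernel-verified Lean document; each statement's English description precedes it below -/
import Mathlib

section
/- In the two-unit example where potential outcomes are Y_1(0,0)=Y_2(0,0)=0, Y_1(1,0)=Y_2(0,1)=1, Y_1(0,1)=Y_2(1,0)=2, Y_1(1,1)=Y_2(1,1)=3, and treatment is completely randomized with P(D=(1,0))=P(D=(0,1))=1/2, the population difference in means τ(1,0) = (1/2)Σ_i (E[Y_i | D_i=1] − E[Y_i | D_i=0]) equals −1, even though every unit-level treatment effect Y_i(1,d_{-i}) − Y_i(0,d_{-i}) equals +1 for all d_{-i} ∈ {0,1}. -/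
open Finset
open scoped Classical
noncomputable section
def prb {Ω : Type*} [Fintype Ω] (p : Ω → ℝ) (A : Ω → Prop) : ℝ :=
  ∑ ω, if A ω then p ω else 0
def eiv {Ω : Type*} [Fintype Ω] (p : Ω → ℝ) (f : Ω → ℝ) (A : Ω → Prop) : ℝ :=
  ∑ ω, if A ω then p ω * f ω else 0
def expv {Ω : Type*} [Fintype Ω] (p : Ω → ℝ) (f : Ω → ℝ) : ℝ := ∑ ω, p ω * f ω
def cexp {Ω : Type*} [Fintype Ω] (p : Ω → ℝ) (f : Ω → ℝ) (A : Ω → Prop) : ℝ :=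
  eiv p f A / prb p A
def cpr {Ω : Type*} [Fintype Ω] (p : Ω → ℝ) (A B : Ω → Prop) : ℝ :=
  prb p (fun ω => A ω ∧ B ω) / prb p B
def bR : Bool → ℝ := fun x => if x then 1 else 0
def pCR : (Fin 2 → Bool) → ℝ := fun d =>
  if d = ![true, false] then 1/2 else if d = ![false, true] then 1/2 else 0
def Ydim : Fin 2 → (Fin 2 → Bool) → ℝ := fun i d =>
  if i = 0 then bR (d 0) + 2 * bR (d 1) else 2 * bR (d 0) + bR (d 1)

/-!
Under this design unit `i` is observed treated only when the other unit is untreated, and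
untreated only when the other unit is treated. The naive comparison of the two conditional means
therefore subtracts the spillover effect (`2`) from the direct effect (`1`), which gives `-1`.
-/

lemma Ydim_update_true_sub_update_false (i : Fin 2) (d : Fin 2 → Bool) :
    Ydim i (Function.update d i true) - Ydim i (Function.update d i false) = 1 := by
  fin_cases i <;> simp [Ydim, bR]

lemma eiv_eq_sum_mul_ite {Ω : Type*} [Fintype Ω] (p f : Ω → ℝ) (A : Ω → Prop) :
    eiv p f A = ∑ ω, p ω * if A ω then f ω else 0 := by
  simp only [eiv, mul_ite, mul_zero]

lemma prb_eq_sum_mul_ite {Ω : Type*} [Fintype Ω] (p : Ω → ℝ) (A : Ω → Prop) :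
    prb p A = ∑ ω, p ω * if A ω then 1 else 0 := by
  simp only [prb, mul_ite, mul_one, mul_zero]

lemma sum_pCR_mul (g : (Fin 2 → Bool) → ℝ) :
    ∑ d, pCR d * g d = (g ![true, false] + g ![false, true]) / 2 := by
  rw [Fintype.sum_eq_add ![true, false] ![false, true] (by decide)]
  · simp [pCR, div_eq_inv_mul, mul_add]
  · rintro d ⟨h₁, h₂⟩
    simp [pCR, h₁, h₂]

lemma cexp_pCR_of_left {f : (Fin 2 → Bool) → ℝ} {A : (Fin 2 → Bool) → Prop}
    (hl : A ![true, false]) (hr : ¬ A ![false, true]) : cexp pCR f A = f ![true, false] := by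
  rw [cexp, eiv_eq_sum_mul_ite, prb_eq_sum_mul_ite, sum_pCR_mul, sum_pCR_mul]
  simp [hl, hr]

lemma cexp_pCR_of_right {f : (Fin 2 → Bool) → ℝ} {A : (Fin 2 → Bool) → Prop}
    (hl : ¬ A ![true, false]) (hr : A ![false, true]) : cexp pCR f A = f ![false, true] := by
  rw [cexp, eiv_eq_sum_mul_ite, prb_eq_sum_mul_ite, sum_pCR_mul, sum_pCR_mul]
  simp [hl, hr]

/-- in the two-unit completely randomized example, every unit-level
treatment effect equals `+1`, yet the population difference in means `τ(1,0)` equals `-1`. -/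
theorem stmt0 :
    (∀ i : Fin 2, ∀ dm : Bool,
      Ydim i (Function.update (fun _ => dm) i true) -
        Ydim i (Function.update (fun _ => dm) i false) = 1) ∧
    (1 / 2 : ℝ) *
      ((cexp pCR (Ydim 0) (fun d => d 0 = true) - cexp pCR (Ydim 0) (fun d => d 0 = false)) +
       (cexp pCR (Ydim 1) (fun d => d 1 = true) - cexp pCR (Ydim 1) (fun d => d 1 = false)))
      = -1 := by
  refine ⟨fun i _ => Ydim_update_true_sub_update_false i _, ?_⟩
  rw [cexp_pCR_of_left (by simp) (by simp), cexp_pCR_of_right (by simp) (by simp),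
    cexp_pCR_of_right (by simp) (by simp), cexp_pCR_of_left (by simp) (by simp)]
  norm_num [Ydim, bR]
end
end

section
/- If D is Bernoulli randomized, i.e., D_i is independent of D_{-i} and potential outcomes are independent of D, then the population difference in means satisfies τ(1,0) = (1/n) Σ_i E[Y_i(1, D_{-i}) − Y_i(0, D_{-i})], and consequently τ(1,0) satisfies treatment sign preservation: if all unit-level effects Y_i(1,d_{-i}) − Y_i(0,d_{-i}) are nonnegative (almost surely, for all d_{-i}) then τ(1,0) ≥ 0. -/
open Finset
open scoped Classical

noncomputable section

/-! Decomposing over the values `d` of `D` and using that the potential outcomes are independent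
of `D`, `E[Yᵢ(D); Dᵢ = b] = Σ_{d, dᵢ = b} E[Yᵢ(d)] P(D = d)`. Since the law of `D` is a product,
the factor of `P(D = d)` belonging to coordinate `i` splits off, and the sum equals
`P(Dᵢ = b) · Σ_d E[Yᵢ(b, d₋ᵢ)] P(D = d) = P(Dᵢ = b) · E[Yᵢ(b, D₋ᵢ)]`. Dividing by `P(Dᵢ = b) > 0`
gives `E[Yᵢ | Dᵢ = b] = E[Yᵢ(b, D₋ᵢ)]`, and sign preservation follows from `p ≥ 0`. -/

section FiniteExpectation

variable {Ω ι : Type*} [Fintype Ω] [Fintype ι]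

lemma expv_eq_eiv_true (p f : Ω → ℝ) : expv p f = eiv p f (fun _ => True) := by
  simp [expv, eiv]

lemma prb_eq_eiv_one (p : Ω → ℝ) (A : Ω → Prop) : prb p A = eiv p (fun _ => 1) A := by
  simp [prb, eiv]

lemma expv_sub (p f g : Ω → ℝ) : expv p (fun ω => f ω - g ω) = expv p f - expv p g := by
  simp only [expv, mul_sub, Finset.sum_sub_distrib]

lemma expv_nonneg {p f : Ω → ℝ} (hp : ∀ ω, 0 ≤ p ω) (hf : ∀ ω, 0 ≤ f ω) : 0 ≤ expv p f :=
  Finset.sum_nonneg fun ω _ => mul_nonneg (hp ω) (hf ω)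

lemma eiv_comp_eq_sum (p : Ω → ℝ) (D : Ω → ι) (F : ι → Ω → ℝ) (A : ι → Prop) :
    eiv p (fun ω => F (D ω) ω) (fun ω => A (D ω)) =
      ∑ d, if A d then eiv p (F d) (fun ω => D ω = d) else 0 := by
  simp only [eiv]
  calc (∑ ω, if A (D ω) then p ω * F (D ω) ω else 0)
      = ∑ ω, ∑ d, if D ω = d then (if A d then p ω * F d ω else 0) else 0 := by
        simp
    _ = ∑ d, if A d then ∑ ω, (if D ω = d then p ω * F d ω else 0) else 0 := by
        rw [Finset.sum_comm]
        refine Finset.sum_congr rfl fun d _ => ?_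
        split_ifs <;> simp

lemma prb_comp_eq_sum (p : Ω → ℝ) (D : Ω → ι) (A : ι → Prop) :
    prb p (fun ω => A (D ω)) = ∑ d, if A d then prb p (fun ω => D ω = d) else 0 := by
  simp only [prb_eq_eiv_one]
  exact eiv_comp_eq_sum p D (fun _ _ => 1) A

variable {p : Ω → ℝ} {D : Ω → ι} {Z : ι → Ω → ℝ}

lemma eiv_comp_of_indep
    (hZ : ∀ d, eiv p (Z d) (fun ω => D ω = d) = expv p (Z d) * prb p (fun ω => D ω = d))
    (A : ι → Prop) :
    eiv p (fun ω => Z (D ω) ω) (fun ω => A (D ω)) =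
      ∑ d, if A d then expv p (Z d) * prb p (fun ω => D ω = d) else 0 := by
  simp only [eiv_comp_eq_sum, hZ]

lemma expv_comp_of_indep
    (hZ : ∀ d, eiv p (Z d) (fun ω => D ω = d) = expv p (Z d) * prb p (fun ω => D ω = d)) :
    expv p (fun ω => Z (D ω) ω) = ∑ d, expv p (Z d) * prb p (fun ω => D ω = d) := by
  simp only [expv_eq_eiv_true, eiv_comp_of_indep hZ (fun _ => True), if_true]

end FiniteExpectation

section ProductWeight

variable {ι α : Type*} [Fintype ι] [DecidableEq ι] [Fintype α]

lemma sum_prod_weight_eq_one (w : ι → α → ℝ) (hw : ∀ j, ∑ a, w j a = 1) :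
    ∑ d : ι → α, ∏ j, w j (d j) = 1 := by
  simp [← Fintype.prod_sum, hw]

lemma sum_ite_apply_eq_mul_sum_update [DecidableEq α] (w : ι → α → ℝ) (i : ι)
    (hw : ∑ a, w i a = 1) (b : α) (h : (ι → α) → ℝ) :
    ∑ d : ι → α, (if d i = b then h d * ∏ j, w j (d j) else 0) =
      w i b * ∑ d : ι → α, h (Function.update d i b) * ∏ j, w j (d j) := by
  set e := (Equiv.funSplitAt i α).symm
  have he_apply : ∀ c r, e (c, r) i = c := by intro c r; simp [e]
  have he_update : ∀ c r, Function.update (e (c, r)) i b = e (b, r) := by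
    intro c r; ext j; by_cases hj : j = i <;> simp [e, hj]
  have he_prod : ∀ c r, ∏ j, w j (e (c, r) j) = w i c * ∏ j : {j // j ≠ i}, w j (r j) := by
    intro c r
    rw [Fintype.prod_eq_mul_prod_subtype_ne _ i]
    simp [e, fun j : {j // j ≠ i} => j.2]
  simp only [← e.sum_comp, Fintype.sum_prod_type, he_apply, he_update, he_prod]
  rw [Finset.sum_comm, Finset.sum_comm (γ := α), Finset.mul_sum]
  refine Finset.sum_congr rfl fun r _ => ?_
  simp only [Finset.sum_ite_eq', Finset.mem_univ, if_true, ← Finset.mul_sum, ← Finset.sum_mul,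
    hw, one_mul]
  ring

end ProductWeight

section Bernoulli

variable {Ω ι : Type*} [Fintype Ω] [Fintype ι] [DecidableEq ι]
  {p : Ω → ℝ} {D : Ω → ι → Bool} {q : ι → ℝ} {Z : (ι → Bool) → Ω → ℝ}

lemma cexp_eq_expv_update
    (hind : ∀ d, prb p (fun ω => D ω = d) = ∏ j, (if d j then q j else 1 - q j))
    (hunc : ∀ d d', eiv p (Z d) (fun ω => D ω = d') = expv p (Z d) * prb p (fun ω => D ω = d'))
    {i : ι} (hq0 : 0 < q i) (hq1 : q i < 1) (b : Bool) :
    cexp p (fun ω => Z (D ω) ω) (fun ω => D ω i = b) =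
      expv p (fun ω => Z (Function.update (D ω) i b) ω) := by
  set w : ι → Bool → ℝ := fun j c => if c then q j else 1 - q j
  have hw : ∀ j, ∑ c, w j c = 1 := fun j => by simp [w]
  have hwb : w i b ≠ 0 := by cases b <;> simp [w] <;> linarith
  have hnum : eiv p (fun ω => Z (D ω) ω) (fun ω => D ω i = b) =
      w i b * ∑ d, expv p (Z (Function.update d i b)) * ∏ j, w j (d j) := by
    rw [eiv_comp_of_indep (fun d => hunc d d) (fun d => d i = b),
      ← sum_ite_apply_eq_mul_sum_update w i (hw i) b (fun d => expv p (Z d))]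
    simp only [hind, w]
  have hden : prb p (fun ω => D ω i = b) = w i b := by
    have hsum := sum_ite_apply_eq_mul_sum_update w i (hw i) b (fun _ => 1)
    simp only [one_mul, sum_prod_weight_eq_one w hw, mul_one] at hsum
    rw [prb_comp_eq_sum p D (fun d => d i = b), ← hsum]
    simp only [hind, w]
  have hrhs : expv p (fun ω => Z (Function.update (D ω) i b) ω) =
      ∑ d, expv p (Z (Function.update d i b)) * ∏ j, w j (d j) := by
    rw [expv_comp_of_indep (Z := fun d => Z (Function.update d i b)) (fun d => hunc _ d)]
    simp only [hind, w]
  rw [cexp, hnum, hden, hrhs, mul_div_cancel_left₀ _ hwb]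

end Bernoulli

theorem stmt2_general {Ω : Type*} [Fintype Ω] (n : ℕ)
    (p : Ω → ℝ) (hp : ∀ ω, 0 ≤ p ω)
    (Y : Fin n → (Fin n → Bool) → Ω → ℝ) (D : Ω → Fin n → Bool)
    (q : Fin n → ℝ) (hq0 : ∀ i, 0 < q i) (hq1 : ∀ i, q i < 1)
    -- mutually independent Bernoulli components
    (hind : ∀ d : Fin n → Bool,
      prb p (fun ω => D ω = d) = ∏ i, (if d i then q i else 1 - q i))
    -- potential outcomes independent of D
    (hunc : ∀ (i : Fin n) (d dvec : Fin n → Bool),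
      eiv p (Y i d) (fun ω => D ω = dvec) = expv p (Y i d) * prb p (fun ω => D ω = dvec)) :
    ((1 : ℝ) / n) * ∑ i,
        (cexp p (fun ω => Y i (D ω) ω) (fun ω => D ω i = true) -
         cexp p (fun ω => Y i (D ω) ω) (fun ω => D ω i = false)) =
      ((1 : ℝ) / n) * ∑ i,
        expv p (fun ω => Y i (Function.update (D ω) i true) ω -
                         Y i (Function.update (D ω) i false) ω) ∧
    ((∀ (i : Fin n) (d : Fin n → Bool) (ω : Ω),
        Y i (Function.update d i false) ω ≤ Y i (Function.update d i true) ω) →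
      0 ≤ ((1 : ℝ) / n) * ∑ i,
        (cexp p (fun ω => Y i (D ω) ω) (fun ω => D ω i = true) -
         cexp p (fun ω => Y i (D ω) ω) (fun ω => D ω i = false))) := by
  have hunit : ∀ i, cexp p (fun ω => Y i (D ω) ω) (fun ω => D ω i = true) -
      cexp p (fun ω => Y i (D ω) ω) (fun ω => D ω i = false) =
      expv p (fun ω => Y i (Function.update (D ω) i true) ω -
        Y i (Function.update (D ω) i false) ω) := fun i => by
    rw [cexp_eq_expv_update hind (hunc i) (hq0 i) (hq1 i),
      cexp_eq_expv_update hind (hunc i) (hq0 i) (hq1 i), expv_sub]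
  simp only [hunit, true_and]
  intro hmono
  exact mul_nonneg (by positivity) <| Finset.sum_nonneg fun i _ =>
    expv_nonneg hp fun ω => sub_nonneg.2 (hmono i (D ω) ω)

/-- under Bernoulli randomization (mutually independent components of `D`,
independent of the potential outcomes), the population difference in means equals
`(1/n) Σᵢ E[Yᵢ(1,D₋ᵢ) − Yᵢ(0,D₋ᵢ)]`; consequently it satisfies treatment sign preservation. -/
theorem stmt2 {Ω : Type*} [Fintype Ω] (n : ℕ) (hn : 0 < n)
    (p : Ω → ℝ) (hp : ∀ ω, 0 ≤ p ω) (hp1 : ∑ ω, p ω = 1)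
    (Y : Fin n → (Fin n → Bool) → Ω → ℝ) (D : Ω → Fin n → Bool)
    (q : Fin n → ℝ) (hq0 : ∀ i, 0 < q i) (hq1 : ∀ i, q i < 1)
    -- mutually independent Bernoulli components
    (hind : ∀ d : Fin n → Bool,
      prb p (fun ω => D ω = d) = ∏ i, (if d i then q i else 1 - q i))
    -- potential outcomes independent of D
    (hunc : ∀ (i : Fin n) (d dvec : Fin n → Bool),
      eiv p (Y i d) (fun ω => D ω = dvec) = expv p (Y i d) * prb p (fun ω => D ω = dvec)) :
    ((1 : ℝ) / n) * ∑ i,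
        (cexp p (fun ω => Y i (D ω) ω) (fun ω => D ω i = true) -
         cexp p (fun ω => Y i (D ω) ω) (fun ω => D ω i = false)) =
      ((1 : ℝ) / n) * ∑ i,
        expv p (fun ω => Y i (Function.update (D ω) i true) ω -
                         Y i (Function.update (D ω) i false) ω) ∧
    ((∀ (i : Fin n) (d : Fin n → Bool) (ω : Ω),
        Y i (Function.update d i false) ω ≤ Y i (Function.update d i true) ω) →
      0 ≤ ((1 : ℝ) / n) * ∑ i,
        (cexp p (fun ω => Y i (D ω) ω) (fun ω => D ω i = true) -
         cexp p (fun ω => Y i (D ω) ω) (fun ω => D ω i = false))) :=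
  stmt2_general n p hp Y D q hq0 hq1 hind hunc
end
end

section
/- Under unconfoundedness (Y_i(·) ⊥ D | 𝒞_i) and the exposure-mapping pinning condition (f(d_{N(i,K)}) = t' implies d_{N(i,K)} = δ_i for a fixed vector δ_i), the estimand τ(t,t') decomposes as τ(t,t') = τ*(t,t') + ℛ_n, where τ*(t,t') = (1/m_n) Σ_{i∈ℳ_n} Σ_{d∈{0,1}^n} E[Y_i(d) − Y_i(δ_i, d_{−N(i,K)}) | 𝒞_i] · P(D=d | T_i=t, 𝒞_i) and ℛ_n = (1/m_n) Σ_{i∈ℳ_n} Σ_{d∈{0,1}^n} E[Y_i(δ_i, d_{−N(i,K)}) | 𝒞_i] · (P(D=d | T_i=t, 𝒞_i) − P(D=d | T_i=t', 𝒞_i)). -/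
open Finset
open scoped Classical

noncomputable section

section Framework

variable {Ω : Type*} [Fintype Ω] {n : ℕ} {E : Type*}

/-- The assignment vector equal to `δ i` on the `K`-neighborhood `N i` and to `d` outside it:
`(δᵢ, d₋N(i,K))`. -/
def pin (N : Fin n → Finset (Fin n)) (δ : Fin n → Fin n → Bool) (i : Fin n)
    (d : Fin n → Bool) : Fin n → Bool :=
  fun j => if j ∈ N i then δ i j else d j

/-- The exposure-mapping estimand
`τ(t,t') = (1/mₙ) Σ_{i∈ℳₙ} (E[Yᵢ | Tᵢ = t, 𝒞ᵢ] − E[Yᵢ | Tᵢ = t', 𝒞ᵢ])`,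
where `Tᵢ = f(i, D)` and the event `C i` is the conditioning value of the controls `𝒞ᵢ`. -/
def tauE (p : Ω → ℝ) (Y : Fin n → (Fin n → Bool) → Ω → ℝ) (D : Ω → Fin n → Bool)
    (C : Fin n → Ω → Prop) (f : Fin n → (Fin n → Bool) → E) (M : Finset (Fin n))
    (t t' : E) : ℝ :=
  (M.card : ℝ)⁻¹ * ∑ i ∈ M,
    (cexp p (fun ω => Y i (D ω) ω) (fun ω => f i (D ω) = t ∧ C i ω) -
     cexp p (fun ω => Y i (D ω) ω) (fun ω => f i (D ω) = t' ∧ C i ω))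

/-- `τ*(t,t') = (1/mₙ) Σ_{i∈ℳₙ} Σ_d E[Yᵢ(d) − Yᵢ(δᵢ, d₋N(i,K)) | 𝒞ᵢ] · P(D = d | Tᵢ = t, 𝒞ᵢ)`. -/
def tauStarE (p : Ω → ℝ) (Y : Fin n → (Fin n → Bool) → Ω → ℝ) (D : Ω → Fin n → Bool)
    (C : Fin n → Ω → Prop) (f : Fin n → (Fin n → Bool) → E) (M : Finset (Fin n))
    (N : Fin n → Finset (Fin n)) (δ : Fin n → Fin n → Bool) (t : E) : ℝ :=
  (M.card : ℝ)⁻¹ * ∑ i ∈ M, ∑ d : Fin n → Bool,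
    cexp p (fun ω => Y i d ω - Y i (pin N δ i d) ω) (C i) *
      cpr p (fun ω => D ω = d) (fun ω => f i (D ω) = t ∧ C i ω)

/-- The bias term
`ℛₙ = (1/mₙ) Σ_{i∈ℳₙ} Σ_d E[Yᵢ(δᵢ, d₋N(i,K)) | 𝒞ᵢ] (P(D=d | Tᵢ=t, 𝒞ᵢ) − P(D=d | Tᵢ=t', 𝒞ᵢ))`. -/
def RnE (p : Ω → ℝ) (Y : Fin n → (Fin n → Bool) → Ω → ℝ) (D : Ω → Fin n → Bool)
    (C : Fin n → Ω → Prop) (f : Fin n → (Fin n → Bool) → E) (M : Finset (Fin n))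
    (N : Fin n → Finset (Fin n)) (δ : Fin n → Fin n → Bool) (t t' : E) : ℝ :=
  (M.card : ℝ)⁻¹ * ∑ i ∈ M, ∑ d : Fin n → Bool,
    cexp p (fun ω => Y i (pin N δ i d) ω) (C i) *
      (cpr p (fun ω => D ω = d) (fun ω => f i (D ω) = t ∧ C i ω) -
       cpr p (fun ω => D ω = d) (fun ω => f i (D ω) = t' ∧ C i ω))

end Framework

/-! Unconfoundedness makes `E[Yᵢ | Tᵢ = s, 𝒞ᵢ]` the mixture `Σ_d E[Yᵢ(d) | 𝒞ᵢ] P(D = d | Tᵢ = s, 𝒞ᵢ)`.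
Adding and subtracting the pinned means `E[Yᵢ(δᵢ, d₋N(i,K)) | 𝒞ᵢ]` under the `t`-weights gives
`τ* + ℛₙ` up to the `t'`-part of `ℛₙ`, which is the mixture for `t'` itself: every `d` with
exposure `t'` already equals `δᵢ` on `N(i,K)`, so pinning does not move it. -/

section ConditionalExpectation

variable {Ω α : Type*} [Fintype Ω] (p : Ω → ℝ)

lemma cexp_sub (X Z : Ω → ℝ) (A : Ω → Prop) :
    cexp p (fun ω => X ω - Z ω) A = cexp p X A - cexp p Z A := by
  unfold cexp eiv
  rw [← sub_div, ← Finset.sum_sub_distrib]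
  congr 1
  refine Finset.sum_congr rfl fun ω _ => ?_
  split_ifs <;> ring

/-- On `{D = a}` the extra condition `S(D)` is either automatic or impossible. -/
lemma eiv_eq_cexp_mul_prb_of_meanIndep (Z : Ω → ℝ) (D : Ω → α) (A : Ω → Prop) (S : α → Prop)
    (a : α) (hA : prb p A ≠ 0)
    (hindep : eiv p Z (fun ω => D ω = a ∧ A ω) * prb p A =
      eiv p Z A * prb p (fun ω => D ω = a ∧ A ω)) :
    eiv p Z (fun ω => D ω = a ∧ S (D ω) ∧ A ω) =
      cexp p Z A * prb p (fun ω => D ω = a ∧ S (D ω) ∧ A ω) := by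
  by_cases hS : S a
  · have hevent : (fun ω => D ω = a ∧ S (D ω) ∧ A ω) = fun ω => D ω = a ∧ A ω := by
      ext ω
      constructor
      · rintro ⟨hD, -, hAω⟩
        exact ⟨hD, hAω⟩
      · rintro ⟨hD, hAω⟩
        exact ⟨hD, hD ▸ hS, hAω⟩
    rw [hevent, cexp, div_mul_eq_mul_div, eq_div_iff hA, hindep]
  · have hevent : (fun ω => D ω = a ∧ S (D ω) ∧ A ω) = fun _ => False := by
      ext ω
      simp only [iff_false, not_and]
      rintro hD hSω -
      exact hS (hD ▸ hSω)
    rw [hevent]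
    simp [eiv, prb]

variable [Fintype α]

lemma eiv_comp_eq_sum_s3 (Z : α → Ω → ℝ) (D : Ω → α) (B : Ω → Prop) :
    eiv p (fun ω => Z (D ω) ω) B = ∑ a, eiv p (Z a) (fun ω => D ω = a ∧ B ω) := by
  unfold eiv
  rw [Finset.sum_comm]
  refine Finset.sum_congr rfl fun ω _ => ?_
  by_cases hB : B ω <;> simp [hB]

lemma cexp_comp_eq_sum_mul_cpr (Z : α → Ω → ℝ) (D : Ω → α) (B : Ω → Prop) (m : α → ℝ)
    (h : ∀ a, eiv p (Z a) (fun ω => D ω = a ∧ B ω) = m a * prb p (fun ω => D ω = a ∧ B ω)) :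
    cexp p (fun ω => Z (D ω) ω) B = ∑ a, m a * cpr p (fun ω => D ω = a) B := by
  unfold cexp cpr
  simp only [eiv_comp_eq_sum_s3, h, Finset.sum_div, mul_div_assoc]

lemma cexp_comp_eq_sum_cexp_mul_cpr (Z : α → Ω → ℝ) (D : Ω → α) (A : Ω → Prop)
    (S : α → Prop) (hA : prb p A ≠ 0)
    (hindep : ∀ a b, eiv p (Z a) (fun ω => D ω = b ∧ A ω) * prb p A =
      eiv p (Z a) A * prb p (fun ω => D ω = b ∧ A ω)) :
    cexp p (fun ω => Z (D ω) ω) (fun ω => S (D ω) ∧ A ω) =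
      ∑ a, cexp p (Z a) A * cpr p (fun ω => D ω = a) (fun ω => S (D ω) ∧ A ω) :=
  cexp_comp_eq_sum_mul_cpr p Z D _ _ fun a =>
    eiv_eq_cexp_mul_prb_of_meanIndep p (Z a) D A S a hA (hindep a a)

lemma sum_mul_cpr_congr (D : Ω → α) (B : Ω → Prop) {g h : α → ℝ}
    (hgh : ∀ a, (∃ ω, D ω = a ∧ B ω) → g a = h a) :
    ∑ a, g a * cpr p (fun ω => D ω = a) B = ∑ a, h a * cpr p (fun ω => D ω = a) B := by
  refine Finset.sum_congr rfl fun a _ => ?_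
  by_cases hattained : ∃ ω, D ω = a ∧ B ω
  · rw [hgh a hattained]
  · have hprb : prb p (fun ω => D ω = a ∧ B ω) = 0 :=
      Finset.sum_eq_zero fun ω _ => if_neg fun h => hattained ⟨ω, h⟩
    simp [cpr, hprb]

end ConditionalExpectation

/-- `π` plays the role of `d ↦ (δᵢ, d₋N(i,K))`. -/
lemma cexp_sub_cexp_eq_add {Ω α E : Type*} [Fintype Ω] [Fintype α] (p : Ω → ℝ)
    (Z : α → Ω → ℝ) (D : Ω → α) (A : Ω → Prop) (T : α → E) (t t' : E) (π : α → α)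
    (hπ : ∀ a, T a = t' → π a = a) (hA : prb p A ≠ 0)
    (hindep : ∀ a b, eiv p (Z a) (fun ω => D ω = b ∧ A ω) * prb p A =
      eiv p (Z a) A * prb p (fun ω => D ω = b ∧ A ω)) :
    cexp p (fun ω => Z (D ω) ω) (fun ω => T (D ω) = t ∧ A ω) -
        cexp p (fun ω => Z (D ω) ω) (fun ω => T (D ω) = t' ∧ A ω) =
      ∑ a, cexp p (fun ω => Z a ω - Z (π a) ω) A *
          cpr p (fun ω => D ω = a) (fun ω => T (D ω) = t ∧ A ω) +
        ∑ a, cexp p (Z (π a)) A *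
          (cpr p (fun ω => D ω = a) (fun ω => T (D ω) = t ∧ A ω) -
            cpr p (fun ω => D ω = a) (fun ω => T (D ω) = t' ∧ A ω)) := by
  have hpinned : ∑ a, cexp p (Z (π a)) A *
        cpr p (fun ω => D ω = a) (fun ω => T (D ω) = t' ∧ A ω) =
      ∑ a, cexp p (Z a) A * cpr p (fun ω => D ω = a) (fun ω => T (D ω) = t' ∧ A ω) :=
    sum_mul_cpr_congr p D _ fun a ⟨ω, hD, hT, _⟩ => by rw [hπ a (hD ▸ hT)]
  rw [cexp_comp_eq_sum_cexp_mul_cpr p Z D A (T · = t) hA hindep,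
    cexp_comp_eq_sum_cexp_mul_cpr p Z D A (T · = t') hA hindep, ← hpinned]
  simp only [cexp_sub, sub_mul, mul_sub, Finset.sum_sub_distrib]
  ring

lemma pin_eq_self {n : ℕ} {N : Fin n → Finset (Fin n)} {δ : Fin n → Fin n → Bool} {i : Fin n}
    {d : Fin n → Bool} (hd : ∀ j ∈ N i, d j = δ i j) : pin N δ i d = d := by
  funext j
  unfold pin
  split_ifs with hj
  · exact (hd j hj).symm
  · rfl

theorem stmt3_general {Ω : Type*} [Fintype Ω] {n : ℕ} {E : Type*}
    (p : Ω → ℝ)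
    (Y : Fin n → (Fin n → Bool) → Ω → ℝ) (D : Ω → Fin n → Bool)
    (C : Fin n → Ω → Prop) (N : Fin n → Finset (Fin n))
    (f : Fin n → (Fin n → Bool) → E) (M : Finset (Fin n))
    (t t' : E) (δ : Fin n → Fin n → Bool)
    -- Assumption 2 (pinning): `f(d_{N(i,K)}) = t'` implies `d_{N(i,K)} = δᵢ`
    (hpin : ∀ (i : Fin n) (d : Fin n → Bool), f i d = t' → ∀ j ∈ N i, d j = δ i j)
    -- Assumption 1 (unconfoundedness): `Yᵢ(·) ⊥ D | 𝒞ᵢ`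
    (hunc : ∀ (i : Fin n) (d dvec : Fin n → Bool),
      eiv p (fun ω => Y i d ω) (fun ω => D ω = dvec ∧ C i ω) * prb p (C i) =
        eiv p (fun ω => Y i d ω) (C i) * prb p (fun ω => D ω = dvec ∧ C i ω))
    -- overlap: both exposure events have positive probability within the controls
    (hC : ∀ i ∈ M, 0 < prb p (C i)) :
    tauE p Y D C f M t t' = tauStarE p Y D C f M N δ t + RnE p Y D C f M N δ t t' := by
  unfold tauE tauStarE RnE
  rw [← mul_add, ← Finset.sum_add_distrib]
  congr 1
  refine Finset.sum_congr rfl fun i hi => ?_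
  exact cexp_sub_cexp_eq_add p (Y i) D (C i) (f i) t t' (pin N δ i)
    (fun d hd => pin_eq_self (hpin i d hd)) (hC i hi).ne' (hunc i)

/-- decomposition lemma: under unconfoundedness and the exposure-mapping
pinning condition, `τ(t,t') = τ*(t,t') + ℛₙ`. -/
theorem stmt3 {Ω : Type*} [Fintype Ω] {n : ℕ} {E : Type*}
    (p : Ω → ℝ) (hp : ∀ ω, 0 ≤ p ω) (hp1 : ∑ ω, p ω = 1)
    (Y : Fin n → (Fin n → Bool) → Ω → ℝ) (D : Ω → Fin n → Bool)
    (C : Fin n → Ω → Prop) (N : Fin n → Finset (Fin n))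
    (f : Fin n → (Fin n → Bool) → E) (M : Finset (Fin n))
    (t t' : E) (δ : Fin n → Fin n → Bool)
    -- `f` is a `K`-neighborhood exposure mapping: it depends on `d` only through `d_{N(i,K)}`
    (hf : ∀ (i : Fin n) (d d' : Fin n → Bool), (∀ j ∈ N i, d j = d' j) → f i d = f i d')
    -- Assumption 2 (pinning): `f(d_{N(i,K)}) = t'` implies `d_{N(i,K)} = δᵢ`
    (hpin : ∀ (i : Fin n) (d : Fin n → Bool), f i d = t' → ∀ j ∈ N i, d j = δ i j)
    -- Assumption 1 (unconfoundedness): `Yᵢ(·) ⊥ D | 𝒞ᵢ`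
    (hunc : ∀ (i : Fin n) (d dvec : Fin n → Bool),
      eiv p (fun ω => Y i d ω) (fun ω => D ω = dvec ∧ C i ω) * prb p (C i) =
        eiv p (fun ω => Y i d ω) (C i) * prb p (fun ω => D ω = dvec ∧ C i ω))
    -- overlap: both exposure events have positive probability within the controls
    (hC : ∀ i ∈ M, 0 < prb p (C i))
    (hposT : ∀ i ∈ M, 0 < prb p (fun ω => f i (D ω) = t ∧ C i ω))
    (hposT' : ∀ i ∈ M, 0 < prb p (fun ω => f i (D ω) = t' ∧ C i ω)) :
    tauE p Y D C f M t t' = tauStarE p Y D C f M N δ t + RnE p Y D C f M N δ t t' :=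
  stmt3_general p Y D C N f M t t' δ hpin hunc hC
end
end

section
/- Under unconfoundedness alone (Y_i(·) ⊥ D | 𝒞_i), the estimand admits the representation τ(t,t') = (1/m_n) Σ_{i∈ℳ_n} [Σ_d E[Y_i(d) | 𝒞_i] P(D=d | T_i=t, 𝒞_i) − Σ_{d'} E[Y_i(d') | 𝒞_i] P(D=d' | T_i=t', 𝒞_i)], and if min_i min 𝒯_i(t,t') ≥ 0, where 𝒯_i(t,t') = {Y_i(d) − Y_i(d') : f(d_{N(i,K)})=t, f(d'_{N(i,K)})=t'}, then τ(t,t') ≥ 0 (general sign preservation). -/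
/-!
Conditioning on the assignment `D = d` first, unconfoundedness replaces `E[Yᵢ(d) | D = d, 𝒞ᵢ]`
by `E[Yᵢ(d) | 𝒞ᵢ]`, so `E[Yᵢ | Tᵢ = t, 𝒞ᵢ]` is a convex combination of the values
`E[Yᵢ(d) | 𝒞ᵢ]`, with weights `P(D = d | Tᵢ = t, 𝒞ᵢ)` supported on assignments of exposure `t`.
If every value in the support of the `t`-weights dominates every value in the support of the
`t'`-weights, the `t`-combination dominates the `t'`-combination, unit by unit.
-/

open Finset
open scoped Classical

noncomputable section

lemma sum_mul_le_sum_mul_of_support {α : Type*} [Fintype α] (a q r : α → ℝ)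
    (hq0 : ∀ x, 0 ≤ q x) (hr0 : ∀ x, 0 ≤ r x) (hq1 : ∑ x, q x = 1) (hr1 : ∑ x, r x = 1)
    (h : ∀ x x', 0 < q x → 0 < r x' → a x' ≤ a x) :
    ∑ x, a x * r x ≤ ∑ x, a x * q x := by
  have hdiff : ∑ x, a x * q x - ∑ x, a x * r x =
      ∑ x, ∑ x', (a x - a x') * (q x * r x') := by
    simp only [sub_mul, Finset.sum_sub_distrib]
    congr 1
    · simp only [← mul_assoc, ← Finset.mul_sum, hr1, mul_one]
    · rw [Finset.sum_comm]
      simp only [mul_left_comm _ (q _), ← Finset.sum_mul, hq1, one_mul]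
  rw [← sub_nonneg, hdiff]
  refine Finset.sum_nonneg fun x _ => Finset.sum_nonneg fun x' _ => ?_
  rcases (hq0 x).eq_or_lt with hq | hq
  · simp [← hq]
  rcases (hr0 x').eq_or_lt with hr | hr
  · simp [← hr]
  exact mul_nonneg (sub_nonneg.2 (h x x' hq hr)) (mul_pos hq hr).le

section FiniteProbability

variable {Ω : Type*} [Fintype Ω] {α : Type*} {E : Type*} (p : Ω → ℝ)

lemma prb_nonneg (hp : ∀ ω, 0 ≤ p ω) (A : Ω → Prop) : 0 ≤ prb p A :=
  Finset.sum_nonneg fun ω _ => by split_ifs <;> simp [hp ω]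

lemma prb_eq_zero_of_forall_not {A : Ω → Prop} (h : ∀ ω, ¬ A ω) : prb p A = 0 := by
  simp [prb, h]

lemma eiv_eq_zero_of_forall_not (g : Ω → ℝ) {A : Ω → Prop} (h : ∀ ω, ¬ A ω) :
    eiv p g A = 0 := by
  simp [eiv, h]

lemma cexp_mono (hp : ∀ ω, 0 ≤ p ω) {g g' : Ω → ℝ} (A : Ω → Prop) (h : ∀ ω, g ω ≤ g' ω) :
    cexp p g A ≤ cexp p g' A := by
  refine div_le_div_of_nonneg_right (Finset.sum_le_sum fun ω _ => ?_) (prb_nonneg p hp A)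
  split_ifs
  · exact mul_le_mul_of_nonneg_left (h ω) (hp ω)
  · rfl

lemma cpr_nonneg (hp : ∀ ω, 0 ≤ p ω) (A B : Ω → Prop) : 0 ≤ cpr p A B :=
  div_nonneg (prb_nonneg p hp _) (prb_nonneg p hp B)

lemma eq_of_cpr_pos {X : Ω → α} {C : Ω → Prop} {g : α → E} {t : E} {x : α}
    (h : 0 < cpr p (fun ω => X ω = x) (fun ω => g (X ω) = t ∧ C ω)) : g x = t := by
  by_contra hx
  have hempty : ∀ ω, ¬ (X ω = x ∧ g (X ω) = t ∧ C ω) := fun ω ⟨h1, h2, _⟩ => hx (h1 ▸ h2)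
  simp [cpr, prb_eq_zero_of_forall_not p hempty] at h

variable [Fintype α]

lemma sum_prb_fiber (X : Ω → α) (A : Ω → Prop) :
    ∑ x, prb p (fun ω => X ω = x ∧ A ω) = prb p A := by
  unfold prb
  rw [Finset.sum_comm]
  refine Finset.sum_congr rfl fun ω _ => ?_
  by_cases hA : A ω <;> simp [hA]

lemma sum_eiv_fiber (X : Ω → α) (Y : α → Ω → ℝ) (A : Ω → Prop) :
    ∑ x, eiv p (Y x) (fun ω => X ω = x ∧ A ω) = eiv p (fun ω => Y (X ω) ω) A := by
  unfold eiv
  rw [Finset.sum_comm]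
  refine Finset.sum_congr rfl fun ω _ => ?_
  by_cases hA : A ω <;> simp [hA]

lemma sum_cpr_fiber (X : Ω → α) {B : Ω → Prop} (hB : 0 < prb p B) :
    ∑ x, cpr p (fun ω => X ω = x) B = 1 := by
  unfold cpr
  rw [← Finset.sum_div, sum_prb_fiber, div_self hB.ne']

lemma cexp_eq_sum_cexp_mul_cpr (X : Ω → α) (Y : α → Ω → ℝ) (C : Ω → Prop) (g : α → E) (t : E)
    (hunc : ∀ x, eiv p (Y x) (fun ω => X ω = x ∧ C ω) * prb p C =
      eiv p (Y x) C * prb p (fun ω => X ω = x ∧ C ω))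
    (hC : 0 < prb p C) :
    cexp p (fun ω => Y (X ω) ω) (fun ω => g (X ω) = t ∧ C ω) =
      ∑ x, cexp p (Y x) C * cpr p (fun ω => X ω = x) (fun ω => g (X ω) = t ∧ C ω) := by
  set A : Ω → Prop := fun ω => g (X ω) = t ∧ C ω
  -- On the fibre `X = x` the exposure event is either all of `C` or empty, and on `C`
  -- unconfoundedness gives `E[Y x; X = x, C] = E[Y x | C] P(X = x, C)`.
  have hfiber : ∀ x, eiv p (Y x) (fun ω => X ω = x ∧ A ω) =
      cexp p (Y x) C * prb p (fun ω => X ω = x ∧ A ω) := by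
    intro x
    by_cases hx : g x = t
    · have hA : (fun ω => X ω = x ∧ A ω) = fun ω => X ω = x ∧ C ω := by
        funext ω
        exact propext ⟨fun ⟨h1, _, h3⟩ => ⟨h1, h3⟩, fun ⟨h1, h2⟩ => ⟨h1, h1 ▸ hx, h2⟩⟩
      rw [hA, cexp, div_mul_eq_mul_div, eq_div_iff hC.ne']
      exact hunc x
    · have hempty : ∀ ω, ¬ (X ω = x ∧ A ω) := fun ω ⟨h1, h2, _⟩ => hx (h1 ▸ h2)
      rw [eiv_eq_zero_of_forall_not p _ hempty, prb_eq_zero_of_forall_not p hempty, mul_zero]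
  rw [cexp, ← sum_eiv_fiber p X Y A, Finset.sum_div]
  simp only [hfiber, mul_div_assoc, cpr]

lemma sum_cexp_mul_cpr_le_of_contrast_nonneg (hp : ∀ ω, 0 ≤ p ω) (X : Ω → α)
    (Y : α → Ω → ℝ) (C : Ω → Prop) (g : α → E) {t t' : E} (ht : 0 < prb p (fun ω => g (X ω) = t ∧ C ω))
    (ht' : 0 < prb p (fun ω => g (X ω) = t' ∧ C ω))
    (hY : ∀ x x', g x = t → g x' = t' → ∀ ω, Y x' ω ≤ Y x ω) :
    ∑ x, cexp p (Y x) C * cpr p (fun ω => X ω = x) (fun ω => g (X ω) = t' ∧ C ω) ≤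
      ∑ x, cexp p (Y x) C * cpr p (fun ω => X ω = x) (fun ω => g (X ω) = t ∧ C ω) :=
  sum_mul_le_sum_mul_of_support _ _ _ (fun _ => cpr_nonneg p hp _ _)
    (fun _ => cpr_nonneg p hp _ _) (sum_cpr_fiber p X ht) (sum_cpr_fiber p X ht')
    fun _ _ hx hx' => cexp_mono p hp C (hY _ _ (eq_of_cpr_pos p hx) (eq_of_cpr_pos p hx'))

end FiniteProbability

lemma tauE_eq_sum_mixture {Ω : Type*} [Fintype Ω] {n : ℕ} {E : Type*} (p : Ω → ℝ)
    (Y : Fin n → (Fin n → Bool) → Ω → ℝ) (D : Ω → Fin n → Bool) (C : Fin n → Ω → Prop)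
    (f : Fin n → (Fin n → Bool) → E) (M : Finset (Fin n)) (t t' : E)
    (hunc : ∀ (i : Fin n) (d : Fin n → Bool),
      eiv p (Y i d) (fun ω => D ω = d ∧ C i ω) * prb p (C i) =
        eiv p (Y i d) (C i) * prb p (fun ω => D ω = d ∧ C i ω))
    (hC : ∀ i ∈ M, 0 < prb p (C i)) :
    tauE p Y D C f M t t' =
      (M.card : ℝ)⁻¹ * ∑ i ∈ M,
        (∑ d, cexp p (Y i d) (C i) * cpr p (fun ω => D ω = d) (fun ω => f i (D ω) = t ∧ C i ω) -
         ∑ d, cexp p (Y i d) (C i) * cpr p (fun ω => D ω = d) (fun ω => f i (D ω) = t' ∧ C i ω)) := by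
  unfold tauE
  congr 1
  refine Finset.sum_congr rfl fun i hi => ?_
  rw [cexp_eq_sum_cexp_mul_cpr p D (Y i) (C i) (f i) t (hunc i) (hC i hi),
    cexp_eq_sum_cexp_mul_cpr p D (Y i) (C i) (f i) t' (hunc i) (hC i hi)]

theorem stmt18_general {Ω : Type*} [Fintype Ω] {n : ℕ} {E : Type*}
    (p : Ω → ℝ) (hp : ∀ ω, 0 ≤ p ω)
    (Y : Fin n → (Fin n → Bool) → Ω → ℝ) (D : Ω → Fin n → Bool)
    (C : Fin n → Ω → Prop)
    (f : Fin n → (Fin n → Bool) → E) (M : Finset (Fin n)) (t t' : E)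
    (hunc : ∀ (i : Fin n) (d dvec : Fin n → Bool),
      eiv p (fun ω => Y i d ω) (fun ω => D ω = dvec ∧ C i ω) * prb p (C i) =
        eiv p (fun ω => Y i d ω) (C i) * prb p (fun ω => D ω = dvec ∧ C i ω))
    (hC : ∀ i ∈ M, 0 < prb p (C i))
    (hposT : ∀ i ∈ M, 0 < prb p (fun ω => f i (D ω) = t ∧ C i ω))
    (hposT' : ∀ i ∈ M, 0 < prb p (fun ω => f i (D ω) = t' ∧ C i ω)) :
    tauE p Y D C f M t t' =
      (M.card : ℝ)⁻¹ * ∑ i ∈ M,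
        (∑ d : Fin n → Bool, cexp p (fun ω => Y i d ω) (C i) *
            cpr p (fun ω => D ω = d) (fun ω => f i (D ω) = t ∧ C i ω) -
         ∑ d' : Fin n → Bool, cexp p (fun ω => Y i d' ω) (C i) *
            cpr p (fun ω => D ω = d') (fun ω => f i (D ω) = t' ∧ C i ω)) ∧
    ((∀ i ∈ M, ∀ (d d' : Fin n → Bool), f i d = t → f i d' = t' →
        ∀ ω, Y i d' ω ≤ Y i d ω) →
      0 ≤ tauE p Y D C f M t t') ∧
    ((∀ i ∈ M, ∀ (d d' : Fin n → Bool), f i d = t → f i d' = t' →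
        ∀ ω, Y i d ω ≤ Y i d' ω) →
      tauE p Y D C f M t t' ≤ 0) := by
  have hrep := tauE_eq_sum_mixture p Y D C f M t t' (fun i d => hunc i d d) hC
  refine ⟨hrep, fun hY => ?_, fun hY => ?_⟩ <;> rw [hrep]
  · refine mul_nonneg (by positivity) (Finset.sum_nonneg fun i hi => sub_nonneg.2 ?_)
    exact sum_cexp_mul_cpr_le_of_contrast_nonneg p hp D (Y i) (C i) (f i) (hposT i hi)
      (hposT' i hi) (hY i hi)
  · refine mul_nonpos_of_nonneg_of_nonpos (by positivity)
      (Finset.sum_nonpos fun i hi => sub_nonpos.2 ?_)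
    exact sum_cexp_mul_cpr_le_of_contrast_nonneg p hp D (Y i) (C i) (f i) (hposT' i hi)
      (hposT i hi) fun d' d hd' hd => hY i hi d d' hd hd'

/-- under unconfoundedness alone, the estimand admits the mixture representation
`τ(t,t') = (1/mₙ) Σ_{i∈ℳₙ} [Σ_d E[Yᵢ(d)|𝒞ᵢ] P(D=d|Tᵢ=t,𝒞ᵢ) − Σ_{d'} E[Yᵢ(d')|𝒞ᵢ]
P(D=d'|Tᵢ=t',𝒞ᵢ)]`, and general sign preservation holds: if all cross-assignment contrasts
`Yᵢ(d) − Yᵢ(d')` with `f(d_{N(i,K)}) = t` and `f(d'_{N(i,K)}) = t'` are nonnegative then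
`τ(t,t') ≥ 0`, and symmetrically for nonpositive contrasts. -/
theorem stmt18 {Ω : Type*} [Fintype Ω] {n : ℕ} {E : Type*}
    (p : Ω → ℝ) (hp : ∀ ω, 0 ≤ p ω) (hp1 : ∑ ω, p ω = 1)
    (Y : Fin n → (Fin n → Bool) → Ω → ℝ) (D : Ω → Fin n → Bool)
    (C : Fin n → Ω → Prop) (N : Fin n → Finset (Fin n))
    (f : Fin n → (Fin n → Bool) → E) (M : Finset (Fin n)) (t t' : E)
    (hf : ∀ (i : Fin n) (d d' : Fin n → Bool), (∀ j ∈ N i, d j = d' j) → f i d = f i d')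
    (hunc : ∀ (i : Fin n) (d dvec : Fin n → Bool),
      eiv p (fun ω => Y i d ω) (fun ω => D ω = dvec ∧ C i ω) * prb p (C i) =
        eiv p (fun ω => Y i d ω) (C i) * prb p (fun ω => D ω = dvec ∧ C i ω))
    (hC : ∀ i ∈ M, 0 < prb p (C i))
    (hposT : ∀ i ∈ M, 0 < prb p (fun ω => f i (D ω) = t ∧ C i ω))
    (hposT' : ∀ i ∈ M, 0 < prb p (fun ω => f i (D ω) = t' ∧ C i ω)) :
    tauE p Y D C f M t t' =
      (M.card : ℝ)⁻¹ * ∑ i ∈ M,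
        (∑ d : Fin n → Bool, cexp p (fun ω => Y i d ω) (C i) *
            cpr p (fun ω => D ω = d) (fun ω => f i (D ω) = t ∧ C i ω) -
         ∑ d' : Fin n → Bool, cexp p (fun ω => Y i d' ω) (C i) *
            cpr p (fun ω => D ω = d') (fun ω => f i (D ω) = t' ∧ C i ω)) ∧
    ((∀ i ∈ M, ∀ (d d' : Fin n → Bool), f i d = t → f i d' = t' →
        ∀ ω, Y i d' ω ≤ Y i d ω) →
      0 ≤ tauE p Y D C f M t t') ∧
    ((∀ i ∈ M, ∀ (d d' : Fin n → Bool), f i d = t → f i d' = t' →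
        ∀ ω, Y i d ω ≤ Y i d' ω) →
      tauE p Y D C f M t t' ≤ 0) :=
  stmt18_general p hp Y D C f M t t' hunc hC hposT hposT'
end
end
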